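/- Let S ⊆ R^d be a set such that no generalized arithmetic progression of the form {b + ε_1v_1 + ... + ε_mv_m : ε_i ∈ {0,1}} with all v_i ≠ 0 is contained in S. Then for all n, all nonzero a_1,...,a_n ∈ R^d, and i.i.d. Rademacher ξ_1,...,ξ_n, we have Pr(a_1ξ_1+...+a_nξ_n ∈ S) ≤ C_m · ρ^{1/(m·2^{m−1})}, where ρ = max_{x∈R^d} Pr(a_1ξ_1+...+a_nξ_n = x) and C_m depends only on m. -/

import Mathlib

/-!
Let `t = ρ^{1/m}`. Cutting off a minimal block `J` with `ρ(J) ≤ 2t` forces `ρ(J) > t`, since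
dropping one coordinate at most doubles `ρ`; as `ρ` is supermultiplicative over disjoint blocks,
repeating this splits the coordinates into `m` blocks with `ρ ≤ 2t` each, and the Rademacher sum
into `m` independent block sums.

For sign vectors `ε, δ` and a set `s` of blocks, look at the cube of hybrids taking the blocks of
`s` from `δ` and the others from `ε`. By Cauchy–Schwarz over one block `k`, the density of pairs
whose cube lies in `S` for `s ∪ {k}` is at least the square of that for `s`, so `p^{2^{m-1}}` is
at most this density for all blocks but the last one. For such a pair either a block sum of `ε` equals that of `δ`
(probability `≤ 2t` per block), or the last block sum of `ε` is determined by the other blocks: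
two values would span, together with `δ`, a proper `m`-cube in `S`. Hence
`p^{2^{m-1}} ≤ 2(m+1)t`, and for `ρ ≥ 4^{-m}` the claim is trivial.
-/

open Finset
open scoped Classical

/-- Probability of an event over uniformly random sign vectors in `{-1,1}^n`
(encoded as `Fin n → Bool`). -/
noncomputable def rprob {n : ℕ} (P : (Fin n → Bool) → Prop) : ℝ :=
  ((Finset.univ : Finset (Fin n → Bool)).filter P).card / 2 ^ n

/-- The Rademacher sum `∑_{i ∈ I} ξ_i a_i` for a sign vector `ε`. -/
noncomputable def radSumOn {n d : ℕ} (a : Fin n → EuclideanSpace ℝ (Fin d))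
    (I : Finset (Fin n)) (ε : Fin n → Bool) : EuclideanSpace ℝ (Fin d) :=
  ∑ i ∈ I, (if ε i then (1 : ℝ) else -1) • a i

noncomputable def radSum {n d : ℕ} (a : Fin n → EuclideanSpace ℝ (Fin d))
    (ε : Fin n → Bool) : EuclideanSpace ℝ (Fin d) :=
  radSumOn a Finset.univ ε

/-- `ρ((a_i)_{i ∈ I}) = max_{x ∈ ℝ^d} Pr(∑_{i ∈ I} a_i ξ_i = x)`. -/
noncomputable def rhoOn {n d : ℕ} (a : Fin n → EuclideanSpace ℝ (Fin d))
    (I : Finset (Fin n)) : ℝ :=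
  sSup {p : ℝ | ∃ x, p = rprob (fun ε => radSumOn a I ε = x)}

open scoped BigOperators

namespace LittlewoodOfford

section Expectation

variable {ι β : Type*} [Fintype ι] [DecidableEq ι] [Fintype β] [Nonempty β]

lemma expect_expect_piecewise (P : Finset ι) (f : (ι → β) → ℝ) :
    𝔼 ε, 𝔼 w, f (P.piecewise w ε) = 𝔼 ε, f ε := by
  have swap : Function.Involutive fun z : (ι → β) × (ι → β) =>
      (P.piecewise z.2 z.1, P.piecewise z.1 z.2) := by
    intro z
    ext i <;> by_cases hi : i ∈ P <;> simp [hi]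
  calc 𝔼 ε, 𝔼 w, f (P.piecewise w ε)
      = 𝔼 z : (ι → β) × (ι → β), f (P.piecewise z.2 z.1) := (expect_product' _ _ _).symm
    _ = 𝔼 z : (ι → β) × (ι → β), f z.1 :=
        Fintype.expect_equiv swap.toPerm _ _ fun _ => rfl
    _ = 𝔼 ε, f ε := by
        rw [← univ_product_univ, expect_product' univ univ fun ε (_ : ι → β) => f ε]
        simp only [Fintype.expect_const]

lemma sq_expect_le_expect_sq {α : Type*} [Fintype α] [Nonempty α] (f : α → ℝ) :
    (𝔼 x, f x) ^ 2 ≤ 𝔼 x, f x ^ 2 := by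
  simpa using expect_mul_sq_le_sq_mul_sq univ f 1

lemma sq_expect_le_expect_expect_mul_piecewise (P : Finset ι) (h : (ι → β) → ℝ) :
    (𝔼 ε, h ε) ^ 2 ≤ 𝔼 ε, 𝔼 w, h ε * h (P.piecewise w ε) := by
  -- Cauchy–Schwarz for the averages of `h` over the fibres of the restriction to `Pᶜ`.
  set G : (ι → β) → ℝ := fun ε => 𝔼 w, h (P.piecewise w ε)
  have hG2 : 𝔼 ε, G ε ^ 2 = 𝔼 ε, 𝔼 w, h ε * h (P.piecewise w ε) := by
    calc 𝔼 ε, G ε ^ 2 = 𝔼 ε, 𝔼 w, h (P.piecewise w ε) * G (P.piecewise w ε) := by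
          refine expect_congr rfl fun ε _ => ?_
          simp only [G, sq, expect_mul, piecewise_idem_right]
      _ = 𝔼 ε, h ε * G ε := expect_expect_piecewise P fun α => h α * G α
      _ = _ := by simp only [G, mul_expect]
  calc (𝔼 ε, h ε) ^ 2 = (𝔼 ε, G ε) ^ 2 := by rw [expect_expect_piecewise]
    _ ≤ 𝔼 ε, G ε ^ 2 := sq_expect_le_expect_sq G
    _ = _ := hG2

lemma expect_mul_eq_of_dependsOn (P : Finset ι) {f g : (ι → β) → ℝ}
    (hf : DependsOn f (↑P)ᶜ) (hg : DependsOn g P) :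
    𝔼 ε, f ε * g ε = (𝔼 ε, f ε) * 𝔼 ε, g ε := by
  rw [← expect_expect_piecewise P, Fintype.expect_mul_expect]
  refine expect_congr rfl fun ε _ => expect_congr rfl fun w _ => ?_
  congr 1
  · exact hf fun i hi => piecewise_eq_of_notMem _ _ _ hi
  · exact hg fun i hi => piecewise_eq_of_mem _ _ _ hi

lemma ite_le_ite_and_forall_not_add_sum {κ : Type*} [Fintype κ] (A : Prop) [Decidable A]
    (C : κ → Prop) [DecidablePred C] [Decidable (A ∧ ∀ k, ¬ C k)] :
    (if A then (1 : ℝ) else 0) ≤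
      (if A ∧ ∀ k, ¬ C k then 1 else 0) + ∑ k, if C k then 1 else 0 := by
  by_cases hC : ∀ k, ¬ C k
  · simp [hC]
  · obtain ⟨k, hk⟩ := not_forall_not.1 hC
    have := single_le_sum (f := fun k => if C k then (1 : ℝ) else 0)
      (fun k _ => by split_ifs <;> norm_num) (mem_univ k)
    simp only [hk, if_true] at this
    split_ifs <;> linarith

end Expectation

section RealPowers

lemma le_mul_rpow_inv_of_pow_le {p x K : ℝ} {N : ℕ} (hN : N ≠ 0) (hp : 0 ≤ p) (hx : 0 ≤ x)
    (hK : 1 ≤ K) (h : p ^ N ≤ K * x) : p ≤ K * x ^ (N⁻¹ : ℝ) := by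
  have hN' : (1 : ℝ) ≤ N := by exact_mod_cast Nat.one_le_iff_ne_zero.2 hN
  calc p ≤ (K * x) ^ (N⁻¹ : ℝ) :=
        (Real.le_rpow_inv_iff_of_pos hp (by positivity) (by positivity)).2
          (by rwa [Real.rpow_natCast])
    _ = K ^ (N⁻¹ : ℝ) * x ^ (N⁻¹ : ℝ) := Real.mul_rpow (by linarith) hx
    _ ≤ K * x ^ (N⁻¹ : ℝ) := by
        gcongr
        exact Real.rpow_le_self_of_one_le hK (inv_le_one_of_one_le₀ hN')

lemma le_rpow_inv_mul_inv_of_pow_le {x ρ : ℝ} {m N : ℕ} (hx0 : 0 ≤ x) (hx1 : x ≤ 1)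
    (hm : m ≠ 0) (hN : 1 ≤ N) (h : x ^ m ≤ ρ) :
    x ≤ ρ ^ ((m : ℝ)⁻¹ * (N : ℝ)⁻¹) := by
  have hN' : (1 : ℝ) ≤ N := by exact_mod_cast hN
  calc x ≤ x ^ (N⁻¹ : ℝ) := Real.self_le_rpow_of_le_one hx0 hx1 (inv_le_one_of_one_le₀ hN')
    _ = (x ^ m) ^ ((m : ℝ)⁻¹ * (N : ℝ)⁻¹) := by
        rw [← Real.rpow_natCast, ← Real.rpow_mul hx0, ← mul_assoc,
          mul_inv_cancel₀ (by exact_mod_cast hm), one_mul]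
    _ ≤ ρ ^ ((m : ℝ)⁻¹ * (N : ℝ)⁻¹) := by gcongr

end RealPowers

section Boxes

variable {ι β κ : Type*} [Fintype ι] [DecidableEq ι]

noncomputable def hybrid (c : ι → κ) (t : Finset κ) (ε δ : ι → β) : ι → β :=
  (univ.filter fun i => c i ∈ t).piecewise δ ε

@[simp]
lemma hybrid_apply (c : ι → κ) (t : Finset κ) (ε δ : ι → β) (i : ι) :
    hybrid c t ε δ i = if c i ∈ t then δ i else ε i := by
  simp [hybrid, piecewise]

lemma hybrid_empty (c : ι → κ) (ε δ : ι → β) : hybrid c ∅ ε δ = ε := by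
  ext i; simp

lemma hybrid_hybrid_self (c : ι → κ) (t : Finset κ) (ε w w' : ι → β) :
    hybrid c t (hybrid c t ε w) w' = hybrid c t ε w' := by
  ext i; by_cases hi : c i ∈ t <;> simp [hi]

def BoxIn (F : (ι → β) → Prop) (c : ι → κ) (s : Finset κ) (ε δ : ι → β) : Prop :=
  ∀ t ⊆ s, F (hybrid c t ε δ)

variable {F : (ι → β) → Prop} {c : ι → κ} {s : Finset κ}

lemma boxIn_empty_iff {ε δ : ι → β} : BoxIn F c ∅ ε δ ↔ F ε := by
  refine ⟨fun h => by simpa [hybrid_empty] using h ∅ subset_rfl, fun h t ht => ?_⟩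
  rwa [subset_empty.1 ht, hybrid_empty]

lemma BoxIn.insert_hybrid [DecidableEq κ] {k : κ} {ε δ w : ι → β}
    (h₁ : BoxIn F c s ε δ) (h₂ : BoxIn F c s (hybrid c {k} ε w) δ) :
    BoxIn F c (insert k s) ε (hybrid c {k} δ w) := by
  intro t ht
  by_cases hkt : k ∈ t
  · convert h₂ (t.erase k) (subset_insert_iff.1 ht) using 1
    ext i
    by_cases hi : c i = k <;> simp [hi, hkt]
  · convert h₁ t ((subset_insert_iff_of_notMem hkt).1 ht) using 1
    ext i
    by_cases hi : c i = k <;> simp [hi, hkt]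

variable [Fintype β] [Nonempty β]

lemma expect_expect_hybrid (c : ι → κ) (t : Finset κ) (f : (ι → β) → ℝ) :
    𝔼 ε, 𝔼 w, f (hybrid c t ε w) = 𝔼 ε, f ε :=
  expect_expect_piecewise _ f

noncomputable def boxDensity (F : (ι → β) → Prop) (c : ι → κ) (s : Finset κ) : ℝ :=
  𝔼 ε, 𝔼 δ, if BoxIn F c s ε δ then 1 else 0

lemma boxDensity_empty : boxDensity F c ∅ = 𝔼 ε, if F ε then 1 else 0 := by
  simp only [boxDensity, boxIn_empty_iff, Fintype.expect_const]

lemma sq_boxDensity_le_boxDensity_insert [DecidableEq κ] (k : κ) :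
    boxDensity F c s ^ 2 ≤ boxDensity F c (insert k s) := by
  let box (s : Finset κ) (ε δ : ι → β) : ℝ := if BoxIn F c s ε δ then 1 else 0
  calc boxDensity F c s ^ 2 = (𝔼 δ, 𝔼 ε, box s ε δ) ^ 2 := by rw [boxDensity, expect_comm]
    _ ≤ 𝔼 δ, (𝔼 ε, box s ε δ) ^ 2 := sq_expect_le_expect_sq _
    _ ≤ 𝔼 δ, 𝔼 ε, 𝔼 w, box s ε δ * box s (hybrid c {k} ε w) δ :=
        expect_le_expect fun δ _ => sq_expect_le_expect_expect_mul_piecewise _ _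
    _ ≤ 𝔼 δ, 𝔼 w, 𝔼 ε, box (insert k s) ε (hybrid c {k} δ w) := by
        refine expect_le_expect fun δ _ => ?_
        rw [expect_comm]
        refine expect_le_expect fun w _ => expect_le_expect fun ε _ => ?_
        by_cases h₁ : BoxIn F c s ε δ <;> by_cases h₂ : BoxIn F c s (hybrid c {k} ε w) δ
        · simp only [box, if_pos h₁, if_pos h₂, if_pos (h₁.insert_hybrid h₂), mul_one,
            le_refl]
        all_goals simp only [box, h₁, h₂, if_false, mul_zero, zero_mul]; split_ifs <;> norm_num
    _ = boxDensity F c (insert k s) := by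
        rw [expect_expect_hybrid c {k} fun δ => 𝔼 ε, box (insert k s) ε δ, boxDensity,
          expect_comm]

lemma boxDensity_empty_pow_le [DecidableEq κ] (s : Finset κ) :
    boxDensity F c ∅ ^ 2 ^ s.card ≤ boxDensity F c s := by
  induction s using Finset.induction_on with
  | empty => simp
  | insert k s hk ih =>
    rw [card_insert_of_notMem hk, pow_succ, pow_mul]
    have h0 : 0 ≤ boxDensity F c ∅ ^ 2 ^ s.card := by
      rw [boxDensity_empty]
      exact pow_nonneg (expect_nonneg fun ε _ => by split_ifs <;> norm_num) _
    exact (pow_le_pow_left₀ h0 ih 2).trans (sq_boxDensity_le_boxDensity_insert k)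

end Boxes


section Rademacher

variable {n d : ℕ}

lemma rprob_eq_expect (P : (Fin n → Bool) → Prop) [DecidablePred P] :
    rprob P = 𝔼 ε, if P ε then 1 else 0 := by
  rw [rprob, Fintype.expect_eq_sum_div_card, sum_boole, Fintype.card_fun, Fintype.card_bool,
    Fintype.card_fin]
  push_cast
  congr

lemma rprob_nonneg (P : (Fin n → Bool) → Prop) : 0 ≤ rprob P := by
  unfold rprob; positivity

lemma rprob_mono {P Q : (Fin n → Bool) → Prop} (h : ∀ ε, P ε → Q ε) :
    rprob P ≤ rprob Q := by
  unfold rprob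
  gcongr
  exact h _

lemma rprob_le_one (P : (Fin n → Bool) → Prop) : rprob P ≤ 1 := by
  refine (rprob_mono (Q := fun _ => True) fun _ _ => trivial).trans_eq ?_
  simp [rprob]

lemma rprob_or_le (P Q : (Fin n → Bool) → Prop) :
    rprob (fun ε => P ε ∨ Q ε) ≤ rprob P + rprob Q := by
  simp only [rprob_eq_expect, ← expect_add_distrib]
  refine expect_le_expect fun ε _ => ?_
  split_ifs <;> simp_all

variable (a : Fin n → EuclideanSpace ℝ (Fin d))

lemma dependsOn_radSumOn (I : Finset (Fin n)) : DependsOn (radSumOn a I) I :=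
  fun _ _ h => sum_congr rfl fun i hi => by rw [h i hi]

lemma rprob_le_rhoOn (I : Finset (Fin n)) (x : EuclideanSpace ℝ (Fin d)) :
    rprob (fun ε => radSumOn a I ε = x) ≤ rhoOn a I :=
  le_csSup ⟨1, by rintro _ ⟨y, rfl⟩; exact rprob_le_one _⟩ ⟨x, rfl⟩

lemma rhoOn_le {I : Finset (Fin n)} {r : ℝ}
    (h : ∀ x, rprob (fun ε => radSumOn a I ε = x) ≤ r) :
    rhoOn a I ≤ r :=
  csSup_le ⟨_, 0, rfl⟩ (by rintro _ ⟨x, rfl⟩; exact h x)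

lemma rhoOn_nonneg (I : Finset (Fin n)) : 0 ≤ rhoOn a I :=
  (rprob_nonneg _).trans (rprob_le_rhoOn a I 0)

lemma rhoOn_empty : rhoOn a ∅ = 1 := by
  refine le_antisymm (rhoOn_le a fun _ => rprob_le_one _) ?_
  refine (le_of_eq ?_).trans (rprob_le_rhoOn a ∅ 0)
  simp only [radSumOn, sum_empty, rprob_eq_expect, if_true, Fintype.expect_one]

lemma exists_rprob_eq_rhoOn (I : Finset (Fin n)) :
    ∃ x, rprob (fun ε => radSumOn a I ε = x) = rhoOn a I := by
  set atoms := {p : ℝ | ∃ x, p = rprob fun ε => radSumOn a I ε = x}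
  have hfin : atoms.Finite := by
    refine ((Set.finite_range fun ε₀ =>
      rprob fun ε => radSumOn a I ε = radSumOn a I ε₀).insert 0).subset ?_
    rintro _ ⟨x, rfl⟩
    by_cases hx : ∃ ε₀, radSumOn a I ε₀ = x
    · obtain ⟨ε₀, rfl⟩ := hx
      exact Or.inr ⟨ε₀, rfl⟩
    · push Not at hx
      left
      simp [rprob, hx]
  obtain ⟨x, hx⟩ := Set.Nonempty.csSup_mem (s := atoms) ⟨_, 0, rfl⟩ hfin
  exact ⟨x, hx.symm⟩

lemma rhoOn_mul_rhoOn_le {I J : Finset (Fin n)} (hIJ : Disjoint I J) :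
    rhoOn a I * rhoOn a J ≤ rhoOn a (I ∪ J) := by
  obtain ⟨x, hx⟩ := exists_rprob_eq_rhoOn a I
  obtain ⟨y, hy⟩ := exists_rprob_eq_rhoOn a J
  have hI : DependsOn (fun ε => if radSumOn a I ε = x then (1 : ℝ) else 0) (↑J)ᶜ := by
    intro ε ε' h
    dsimp only
    rw [dependsOn_radSumOn a I fun i hi => h i (disjoint_left.1 hIJ hi)]
  have hJ : DependsOn (fun ε => if radSumOn a J ε = y then (1 : ℝ) else 0) J := by
    intro ε ε' h
    dsimp only
    rw [dependsOn_radSumOn a J h]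
  rw [← hx, ← hy, rprob_eq_expect, rprob_eq_expect, ← expect_mul_eq_of_dependsOn J hI hJ]
  refine le_trans (expect_le_expect fun ε _ => ?_) ((rprob_eq_expect _).symm.trans_le
    (rprob_le_rhoOn a (I ∪ J) (x + y)))
  by_cases hεx : radSumOn a I ε = x <;> by_cases hεy : radSumOn a J ε = y
  · have : radSumOn a (I ∪ J) ε = x + y := by
      rw [radSumOn, sum_union hIJ, ← hεx, ← hεy]; rfl
    simp [hεx, hεy, this]
  all_goals simp only [hεx, hεy, if_false, mul_zero, zero_mul]; split_ifs <;> norm_num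

lemma rhoOn_erase_le {I : Finset (Fin n)} {i : Fin n} (hi : i ∈ I) :
    rhoOn a (I.erase i) ≤ 2 * rhoOn a I := by
  refine rhoOn_le a fun x => ?_
  calc rprob (fun ε => radSumOn a (I.erase i) ε = x)
      ≤ rprob (fun ε => radSumOn a I ε = x + a i ∨ radSumOn a I ε = x - a i) := by
        refine rprob_mono fun ε hε => ?_
        rw [radSumOn, ← add_sum_erase I _ hi, ← radSumOn, hε]
        cases ε i <;> simp [add_comm, sub_eq_neg_add]
    _ ≤ rhoOn a I + rhoOn a I :=
        (rprob_or_le _ _).trans (add_le_add (rprob_le_rhoOn a I _) (rprob_le_rhoOn a I _))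
    _ = 2 * rhoOn a I := by ring

end Rademacher

section Splitting

variable {n d : ℕ} (a : Fin n → EuclideanSpace ℝ (Fin d))

lemma exists_subset_rhoOn_mem_Ioc {I : Finset (Fin n)} {t : ℝ} (ht : 2 * t < 1)
    (hI : rhoOn a I ≤ 2 * t) : ∃ J ⊆ I, rhoOn a J ∈ Set.Ioc t (2 * t) := by
  obtain ⟨J, hJ, hmin⟩ := exists_min_image (I.powerset.filter fun J => rhoOn a J ≤ 2 * t) card
    ⟨I, by simpa using hI⟩
  rw [mem_filter, mem_powerset] at hJ
  obtain ⟨i, hi⟩ : J.Nonempty := nonempty_iff_ne_empty.2 fun h => by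
    rw [h, rhoOn_empty] at hJ
    linarith [hJ.2]
  refine ⟨J, hJ.1, ?_, hJ.2⟩
  have : 2 * t < rhoOn a (J.erase i) := by
    by_contra! h
    have := hmin (J.erase i) (by simpa using ⟨(erase_subset i J).trans hJ.1, h⟩)
    exact (card_erase_lt_of_mem hi).not_ge this
  linarith [rhoOn_erase_le a hi]

lemma exists_coloring_rhoOn_le {t : ℝ} (ht0 : 0 ≤ t) (ht : 2 * t < 1) (m : ℕ)
    (I : Finset (Fin n)) (hI : rhoOn a I ≤ t ^ (m + 1)) :
    ∃ c : Fin n → Fin (m + 1), ∀ k, rhoOn a (I.filter fun i => c i = k) ≤ 2 * t := by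
  induction m generalizing I with
  | zero =>
    refine ⟨fun _ => 0, fun k => ?_⟩
    rw [filter_true_of_mem fun _ _ => Subsingleton.elim (α := Fin 1) _ _]
    rw [zero_add, pow_one] at hI
    linarith
  | succ m ih =>
    have htt : t ^ (m + 2) ≤ 2 * t := by
      calc t ^ (m + 2) ≤ t := pow_le_of_le_one ht0 (by linarith) (by omega)
        _ ≤ 2 * t := by linarith
    obtain ⟨J, hJI, hJ⟩ := exists_subset_rhoOn_mem_Ioc a ht (hI.trans htt)
    obtain ⟨htJ, hJ⟩ : t < rhoOn a J ∧ rhoOn a J ≤ 2 * t := hJ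
    have hrest : rhoOn a (I \ J) ≤ t ^ (m + 1) := by
      have hmul := rhoOn_mul_rhoOn_le a (disjoint_sdiff : Disjoint J (I \ J))
      rw [union_sdiff_of_subset hJI] at hmul
      by_contra! h
      have : t * t ^ (m + 1) < rhoOn a J * rhoOn a (I \ J) :=
        mul_lt_mul'' htJ h ht0 (by positivity)
      linarith [pow_succ' t (m + 1)]
    obtain ⟨c, hc⟩ := ih (I \ J) hrest
    refine ⟨fun i => if i ∈ J then 0 else (c i).succ, Fin.cases ?_ fun k => ?_⟩
    · convert hJ using 2
      ext i
      by_cases hi : i ∈ J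
      · simp [hi, hJI hi]
      · simp [hi, Fin.succ_ne_zero]
    · convert hc k using 2
      ext i
      by_cases hi : i ∈ J <;> simp [hi, (Fin.succ_ne_zero k).symm]

end Splitting

section Cubes

def ContainsCube {E : Type*} [AddCommMonoid E] (S : Set E) (m : ℕ) : Prop :=
  ∃ (b : E) (v : Fin m → E), (∀ i, v i ≠ 0) ∧
    ∀ ε : Fin m → Bool, (b + ∑ i, (if ε i then v i else 0)) ∈ S

variable {n d m : ℕ} {κ : Type*} [DecidableEq κ] (a : Fin n → EuclideanSpace ℝ (Fin d))

noncomputable def blockSum (c : Fin n → κ) (k : κ) (ε : Fin n → Bool) :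
    EuclideanSpace ℝ (Fin d) :=
  radSumOn a (univ.filter fun i => c i = k) ε

lemma radSum_eq_sum_blockSum [Fintype κ] (c : Fin n → κ) (ε : Fin n → Bool) :
    radSum a ε = ∑ k, blockSum a c k ε :=
  (sum_fiberwise univ c _).symm

lemma blockSum_hybrid (c : Fin n → κ) (k : κ) (t : Finset κ) (ε δ : Fin n → Bool) :
    blockSum a c k (hybrid c t ε δ) =
      if k ∈ t then blockSum a c k δ else blockSum a c k ε := by
  split_ifs with hk <;>
  · refine dependsOn_radSumOn a _ fun i hi => ?_
    simp [(mem_filter.1 (mem_coe.1 hi)).2, hk]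

variable {S : Set (EuclideanSpace ℝ (Fin d))}

lemma exists_blockSum_eq_of_boxIn (hS : ¬ ContainsCube S m) (c : Fin n → Fin m)
    {ε δ : Fin n → Bool} (h : BoxIn (fun ε => radSum a ε ∈ S) c univ ε δ) :
    ∃ k, blockSum a c k ε = blockSum a c k δ := by
  by_contra! hne
  refine hS ⟨radSum a ε, fun k => blockSum a c k δ - blockSum a c k ε,
    fun k => sub_ne_zero.2 (hne k).symm, fun β => ?_⟩
  convert h (univ.filter fun k => β k) (subset_univ _) using 1
  rw [radSum_eq_sum_blockSum a c, radSum_eq_sum_blockSum a c, ← sum_add_distrib]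
  refine sum_congr rfl fun k _ => ?_
  rw [blockSum_hybrid]
  cases hβ : β k <;> simp [hβ]

lemma blockSum_eq_of_boxIn_erase (hS : ¬ ContainsCube S m) (c : Fin n → Fin m) (l : Fin m)
    {ε δ w : Fin n → Bool} (h₁ : BoxIn (fun ε => radSum a ε ∈ S) c (univ.erase l) ε δ)
    (h₂ : BoxIn (fun ε => radSum a ε ∈ S) c (univ.erase l) (hybrid c {l} ε w) δ)
    (hne : ∀ k ≠ l, blockSum a c k ε ≠ blockSum a c k δ) :
    blockSum a c l ε = blockSum a c l w := by
  have h := h₁.insert_hybrid h₂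
  rw [insert_erase (mem_univ l)] at h
  obtain ⟨k, hk⟩ := exists_blockSum_eq_of_boxIn a hS c h
  rw [blockSum_hybrid] at hk
  by_cases hkl : k = l
  · subst hkl
    simpa using hk
  · simp only [mem_singleton, hkl, if_false] at hk
    exact absurd hk (hne k hkl)

lemma expect_boxIn_blockSum_ne_le (hS : ¬ ContainsCube S m) (c : Fin n → Fin m) (l : Fin m)
    {q : ℝ} (hq : ∀ x, rprob (fun ε => blockSum a c l ε = x) ≤ q) :
    𝔼 ε, 𝔼 δ, (if BoxIn (fun ε => radSum a ε ∈ S) c (univ.erase l) ε δ ∧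
      ∀ k, ¬ blockSum a c k δ = blockSum a c k ε then 1 else 0) ≤ q := by
  set B := fun ε δ => BoxIn (fun ε => radSum a ε ∈ S) c (univ.erase l) ε δ ∧
    ∀ k, ¬ blockSum a c k δ = blockSum a c k ε
  have hq0 : 0 ≤ q := (rprob_nonneg _).trans (hq 0)
  rw [expect_comm]
  refine expect_le univ_nonempty fun δ _ => ?_
  rw [← expect_expect_hybrid c {l}]
  refine expect_le univ_nonempty fun ε _ => ?_
  by_cases hex : ∃ w₀, B (hybrid c {l} ε w₀) δ
  · obtain ⟨w₀, hw₀⟩ := hex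
    refine le_trans (expect_le_expect fun w _ => ?_)
      ((rprob_eq_expect _).symm.trans_le (hq (blockSum a c l w₀)))
    split_ifs with hw hlw <;> try norm_num
    refine hlw ?_
    have := blockSum_eq_of_boxIn_erase a hS c l (w := w) hw₀.1
      (by rw [hybrid_hybrid_self]; exact hw.1) ?_
    · rw [blockSum_hybrid, if_pos (mem_singleton_self l)] at this
      exact this.symm
    · exact fun k _ h => hw₀.2 k h.symm
  · push Not at hex
    simp [B, hex, hq0]

lemma boxDensity_erase_le (hS : ¬ ContainsCube S m) (c : Fin n → Fin m) (l : Fin m) {q : ℝ}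
    (hq : ∀ k x, rprob (fun ε => blockSum a c k ε = x) ≤ q) :
    boxDensity (fun ε => radSum a ε ∈ S) c (univ.erase l) ≤ (m + 1) * q := by
  have hcollision : ∀ k, 𝔼 ε, 𝔼 δ,
      (if blockSum a c k δ = blockSum a c k ε then (1 : ℝ) else 0) ≤ q := fun k =>
    expect_le univ_nonempty fun ε _ => (rprob_eq_expect _).symm.trans_le (hq k _)
  let box := BoxIn (fun ε => radSum a ε ∈ S) c (univ.erase l)
  calc boxDensity (fun ε => radSum a ε ∈ S) c (univ.erase l)
      ≤ 𝔼 ε, 𝔼 δ,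
          ((if box ε δ ∧ ∀ k, ¬ blockSum a c k δ = blockSum a c k ε then 1 else 0) +
          ∑ k, if blockSum a c k δ = blockSum a c k ε then 1 else 0) :=
        expect_le_expect fun ε _ => expect_le_expect fun δ _ =>
          ite_le_ite_and_forall_not_add_sum _ _
    _ = (𝔼 ε, 𝔼 δ,
          if box ε δ ∧ ∀ k, ¬ blockSum a c k δ = blockSum a c k ε then 1 else 0) +
          ∑ k, 𝔼 ε, 𝔼 δ, (if blockSum a c k δ = blockSum a c k ε then 1 else 0) := by
        simp only [expect_add_distrib, expect_sum_comm]
    _ ≤ q + ∑ _k : Fin m, q :=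
        add_le_add (expect_boxIn_blockSum_ne_le a hS c l (hq l))
          (sum_le_sum fun k _ => hcollision k)
    _ = (m + 1) * q := by simp; ring

lemma rprob_radSum_mem_pow_le (hS : ¬ ContainsCube S (m + 1)) (c : Fin n → Fin (m + 1))
    {q : ℝ} (hc : ∀ k, rhoOn a (univ.filter fun i => c i = k) ≤ q) :
    rprob (fun ε => radSum a ε ∈ S) ^ 2 ^ m ≤ (m + 2) * q := by
  have key := boxDensity_empty_pow_le (F := fun ε => radSum a ε ∈ S) (c := c)
    (univ.erase (Fin.last m))
  rw [boxDensity_empty, card_erase_of_mem (mem_univ _), card_univ, Fintype.card_fin,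
    add_tsub_cancel_right, ← rprob_eq_expect] at key
  refine key.trans ((boxDensity_erase_le a hS c _ fun k x =>
    (rprob_le_rhoOn a _ x).trans (hc k)).trans_eq ?_)
  push_cast
  ring

lemma rprob_radSum_mem_le_of_rhoOn_lt (hS : ¬ ContainsCube S (m + 1))
    (hρ : rhoOn a univ < (1 / 4) ^ (m + 1)) :
    rprob (fun ε => radSum a ε ∈ S) ≤
      2 * (m + 2) * rhoOn a univ ^ (((m + 1 : ℕ) : ℝ)⁻¹ * ((2 ^ m : ℕ) : ℝ)⁻¹) := by
  have hρ0 := rhoOn_nonneg a univ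
  set t := rhoOn a univ ^ (((m + 1 : ℕ) : ℝ)⁻¹)
  have ht : t ^ (m + 1) = rhoOn a univ := Real.rpow_inv_natCast_pow hρ0 (by omega)
  have ht4 : t < 1 / 4 := lt_of_pow_lt_pow_left₀ (m + 1) (by norm_num) (ht ▸ hρ)
  obtain ⟨c, hc⟩ := exists_coloring_rhoOn_le a (by positivity) (by linarith) m univ ht.ge
  rw [Real.rpow_mul hρ0]
  refine le_mul_rpow_inv_of_pow_le (by positivity) (rprob_nonneg _) (by positivity)
    (by linarith) ?_
  linarith [rprob_radSum_mem_pow_le a hS c hc]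

end Cubes

end LittlewoodOfford

open LittlewoodOfford in
theorem stmt12 (m : ℕ) (hm : 1 ≤ m) :
    ∃ C : ℝ, 0 < C ∧ ∀ (d n : ℕ) (S : Set (EuclideanSpace ℝ (Fin d))),
      (¬ ∃ (b : EuclideanSpace ℝ (Fin d)) (v : Fin m → EuclideanSpace ℝ (Fin d)),
        (∀ i, v i ≠ 0) ∧
        ∀ ε : Fin m → Bool, (b + ∑ i, (if ε i then v i else 0)) ∈ S) →
      ∀ a : Fin n → EuclideanSpace ℝ (Fin d), (∀ i, a i ≠ 0) →
        rprob (fun ε => radSum a ε ∈ S) ≤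
          C * (rhoOn a Finset.univ) ^ ((1 : ℝ) / ((m : ℝ) * 2 ^ (m - 1))) := by
  refine ⟨2 * (m + 1), by positivity, fun d n S hS a _ => ?_⟩
  obtain ⟨m, rfl⟩ : ∃ k, m = k + 1 := ⟨m - 1, by omega⟩
  have hexp : (1 : ℝ) / (((m + 1 : ℕ) : ℝ) * 2 ^ (m + 1 - 1)) =
      ((m + 1 : ℕ) : ℝ)⁻¹ * ((2 ^ m : ℕ) : ℝ)⁻¹ := by
    rw [add_tsub_cancel_right, one_div, mul_inv]
    push_cast
    rfl
  rw [hexp]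
  by_cases hsmall : rhoOn a univ < (1 / 4) ^ (m + 1)
  · refine (rprob_radSum_mem_le_of_rhoOn_lt a hS hsmall).trans_eq ?_
    push_cast
    ring
  · have hquarter := le_rpow_inv_mul_inv_of_pow_le (by norm_num) (by norm_num) m.succ_ne_zero
      (Nat.one_le_two_pow (n := m)) (not_lt.1 hsmall)
    calc rprob (fun ε => radSum a ε ∈ S) ≤ 2 * ((m + 1 : ℕ) + 1) * (1 / 4) := by
          push_cast
          linarith [rprob_le_one fun ε => radSum a ε ∈ S]
      _ ≤ _ := by gcongr
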